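/- Let m = 2^k with k ≥ 1 and let a ∈ F_q with a ≠ 0 if q is even. Then |V_m(a)| = (q^m − q + y₂)/2, where V_m(a) = { α ∈ F_{q^m} : F_q(α) = F_{q^m} and X² + aX − α is irreducible over F_{q^m} }, and y₂ = q − 1 if q is odd and y₂ = q if q is even. -/

import Mathlib

/-!
If `α` lies in a proper subfield `L` of `E = 𝔽_{q^{2^k}}`, then `[E : L]` is even, so every
quadratic over `L` has a root in `E`. Hence irreducibility of `X² + aX - α` over `E` already
forces `F(α) = E`, and `V_m(a)` is the complement of the image of `x ↦ x² + ax`. This map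
identifies `x` exactly with `-a - x`, so its image has `(q^m + f) / 2` elements, where `f` is the
number of fixed points of `x ↦ -a - x`: one if `q` is odd, none if `q` is even and `a ≠ 0`.
-/

open Polynomial Finset

theorem irreducible_X_sq_add_C_mul_X_sub_C_iff {K : Type*} [Field K] (c a : K) :
    Irreducible (X ^ 2 + C c * X - C a) ↔ ∀ x : K, x ^ 2 + c * x ≠ a := by
  have hdeg : (X ^ 2 + C c * X - C a).natDegree = 2 := by compute_degree!
  have hne : X ^ 2 + C c * X - C a ≠ 0 := ne_zero_of_natDegree_gt (n := 0) (by omega)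
  rw [irreducible_iff_roots_eq_zero_of_degree_le_three (by omega) (by omega),
    Multiset.eq_zero_iff_forall_notMem]
  simp [mem_roots hne, sub_eq_zero]

theorem exists_aeval_eq_zero_of_natDegree_dvd_finrank {K L : Type*} [Field K] [Field L]
    [Algebra K L] [Finite L] {f : K[X]} (hf : Irreducible f)
    (h : f.natDegree ∣ Module.finrank K L) : ∃ x : L, aeval x f = 0 := by
  have := Fact.mk hf
  have hrank : Module.finrank K (AdjoinRoot f) = f.natDegree :=
    (AdjoinRoot.powerBasis hf.ne_zero).finrank.trans (AdjoinRoot.powerBasis_dim _)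
  obtain ⟨φ⟩ := FiniteField.nonempty_algHom_of_finrank_dvd (K := AdjoinRoot f) (L := L)
    (hrank ▸ h)
  exact ⟨φ (AdjoinRoot.root f), by
    rw [aeval_algHom_apply, AdjoinRoot.aeval_eq, AdjoinRoot.mk_self, map_zero]⟩

theorem exists_sq_add_mul_eq_of_two_dvd_finrank {K L : Type*} [Field K] [Field L]
    [Algebra K L] [Finite L] (h : 2 ∣ Module.finrank K L) (c a : K) :
    ∃ x : L, x ^ 2 + algebraMap K L c * x = algebraMap K L a := by
  by_cases hirr : Irreducible (X ^ 2 + C c * X - C a)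
  · have hdeg : (X ^ 2 + C c * X - C a).natDegree = 2 := by compute_degree!
    obtain ⟨x, hx⟩ := exists_aeval_eq_zero_of_natDegree_dvd_finrank hirr (hdeg ▸ h)
    exact ⟨x, by simpa [sub_eq_zero] using hx⟩
  · rw [irreducible_X_sq_add_C_mul_X_sub_C_iff] at hirr
    push Not at hirr
    obtain ⟨x, hx⟩ := hirr
    exact ⟨algebraMap K L x, by rw [← hx]; simp⟩

theorem IntermediateField.two_dvd_finrank_of_ne_top {F E : Type*} [Field F] [Field E] [Algebra F E]
    [FiniteDimensional F E] {k : ℕ} (hE : Module.finrank F E = 2 ^ k)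
    {L : IntermediateField F E} (hL : L ≠ ⊤) : 2 ∣ Module.finrank L E := by
  have hdvd : Module.finrank L E ∣ 2 ^ k := ⟨Module.finrank F L, by
    rw [← hE, ← Module.finrank_mul_finrank F L E, mul_comm]⟩
  obtain ⟨j, -, hj⟩ := (Nat.dvd_prime_pow Nat.prime_two).1 hdvd
  have hj0 : j ≠ 0 := by
    rintro rfl
    exact hL (IntermediateField.finrank_eq_one_iff_eq_top.1 hj)
  exact hj ▸ dvd_pow_self 2 hj0

theorem IntermediateField.adjoin_simple_eq_top_of_forall_sq_add_mul_ne {F E : Type*} [Field F]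
    [Field E] [Algebra F E] [Finite E] {k : ℕ} (hE : Module.finrank F E = 2 ^ k) (a : F) {α : E}
    (hα : ∀ x : E, x ^ 2 + algebraMap F E a * x ≠ α) : adjoin F {α} = ⊤ := by
  by_contra hne
  obtain ⟨x, hx⟩ := exists_sq_add_mul_eq_of_two_dvd_finrank (two_dvd_finrank_of_ne_top hE hne)
    (algebraMap F (adjoin F {α}) a) ⟨α, mem_adjoin_simple_self F α⟩
  exact hα x hx

theorem FiniteField.two_eq_zero_iff_even_card {K : Type*} [Field K] [Fintype K] :
    (2 : K) = 0 ↔ Even (Fintype.card K) := by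
  rw [Nat.even_iff, ← FiniteField.even_card_iff_char_two, ← neg_one_eq_one_iff,
    neg_eq_iff_add_eq_zero, one_add_one_eq_two]

theorem Finset.two_mul_card_image_eq_card_add_card_fixedPoints {α β : Type*} [Fintype α]
    [DecidableEq α] [DecidableEq β] (φ : α → β) (σ : α → α) (hσ : Function.Involutive σ)
    (hφ : ∀ x y, φ y = φ x ↔ y = x ∨ y = σ x) :
    2 * #(univ.image φ) = Fintype.card α + #{x | σ x = x} := by
  have hfiber : ∀ x, #{y | φ y = φ x} + #{y | σ y = y ∧ φ y = φ x} = 2 := by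
    intro x
    have hfib : ({y | φ y = φ x} : Finset α) = {x, σ x} := by
      ext y
      simp [hφ]
    by_cases hx : σ x = x
    · have hfix : ({y | σ y = y ∧ φ y = φ x} : Finset α) = {x} := by
        ext y
        simp only [mem_filter, mem_univ, true_and, mem_singleton, hφ, hx, or_self]
        exact ⟨And.right, by rintro rfl; exact ⟨hx, rfl⟩⟩
      simp [hfib, hfix, hx]
    · have hfix : ({y | σ y = y ∧ φ y = φ x} : Finset α) = ∅ := by
        ext y
        simp only [mem_filter, mem_univ, true_and, hφ, notMem_empty, iff_false, not_and]
        rintro hy (rfl | rfl)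
        · exact hx hy
        · rw [hσ x] at hy
          exact hx hy.symm
      rw [hfib, hfix, card_pair (Ne.symm hx), card_empty]
  calc 2 * #(univ.image φ)
      = ∑ v ∈ univ.image φ, (#{y | φ y = v} + #{y | σ y = y ∧ φ y = v}) := by
        rw [mul_comm, ← smul_eq_mul, ← sum_const]
        refine sum_congr rfl fun v hv => ?_
        obtain ⟨x, -, rfl⟩ := mem_image.1 hv
        exact (hfiber x).symm
    _ = Fintype.card α + #{x | σ x = x} := by
        rw [sum_add_distrib, ← card_eq_sum_card_image, ← card_univ,
          card_eq_sum_card_fiberwise (s := {x | σ x = x}) fun x _ => mem_image_of_mem φ (mem_univ x)]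
        simp only [filter_filter]

theorem two_mul_ncard_forall_sq_add_mul_ne_add_card {K : Type*} [Field K] [Fintype K]
    [DecidableEq K] (c : K) :
    2 * {v : K | ∀ x, x ^ 2 + c * x ≠ v}.ncard + #{x : K | -c - x = x} = Fintype.card K := by
  have hcompl : {v : K | ∀ x, x ^ 2 + c * x ≠ v} = ↑(univ.image fun x => x ^ 2 + c * x)ᶜ := by
    ext v; simp
  have himage := two_mul_card_image_eq_card_add_card_fixedPoints (fun x : K => x ^ 2 + c * x)
    (fun x => -c - x) (fun x => by ring) fun x y => by
      have : y ^ 2 + c * y - (x ^ 2 + c * x) = (y - x) * (y - (-c - x)) := by ring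
      rw [← sub_eq_zero, this, mul_eq_zero, sub_eq_zero, sub_eq_zero]
  rw [hcompl, Set.ncard_coe_finset, card_compl]
  have := card_le_univ (univ.image fun x : K => x ^ 2 + c * x)
  omega

theorem card_filter_neg_sub_eq_self_of_two_ne_zero {K : Type*} [Field K] [Fintype K]
    [DecidableEq K] (h2 : (2 : K) ≠ 0) (c : K) : #{x : K | -c - x = x} = 1 :=
  card_eq_one.2 ⟨-c / 2, by
    ext x
    simp only [mem_filter, mem_univ, true_and, mem_singleton]
    constructor
    · intro h; field_simp; linear_combination -h
    · rintro rfl; field_simp; ring⟩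

theorem card_filter_neg_sub_eq_self_of_two_eq_zero {K : Type*} [Field K] [Fintype K]
    [DecidableEq K] (h2 : (2 : K) = 0) {c : K} (hc : c ≠ 0) : #{x : K | -c - x = x} = 0 :=
  card_eq_zero.2 <| filter_eq_empty_iff.2 fun x _ h => hc (by linear_combination -h - x * h2)

theorem card_Vm_pow_two_general
    (q k : ℕ)
    (F : Type*) [Field F] [Fintype F] (hF : Fintype.card F = q)
    (E : Type*) [Field E] [Fintype E] [Algebra F E]
    (hE : Fintype.card E = q ^ (2 ^ k))
    (a : F) (ha : Odd q ∨ a ≠ 0) :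
    2 * Set.ncard {α : E | IntermediateField.adjoin F {α} = ⊤ ∧
        Irreducible (X ^ 2 + C (algebraMap F E a) * X - C α)} =
      q ^ (2 ^ k) - q + (if Odd q then q - 1 else q) := by
  classical
  have hrank : Module.finrank F E = 2 ^ k := by
    have h := Module.card_eq_pow_finrank (K := F) (V := E)
    rw [hF, hE] at h
    exact Nat.pow_right_injective (hF ▸ Fintype.one_lt_card) h.symm
  have hV : {α : E | IntermediateField.adjoin F {α} = ⊤ ∧
      Irreducible (X ^ 2 + C (algebraMap F E a) * X - C α)} =
      {α | ∀ x, x ^ 2 + algebraMap F E a * x ≠ α} := by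
    ext α
    refine (and_iff_right_of_imp fun h => ?_).trans (irreducible_X_sq_add_C_mul_X_sub_C_iff _ _)
    exact IntermediateField.adjoin_simple_eq_top_of_forall_sq_add_mul_ne hrank a
      ((irreducible_X_sq_add_C_mul_X_sub_C_iff _ _).1 h)
  have hcount := two_mul_ncard_forall_sq_add_mul_ne_add_card (algebraMap F E a)
  have hodd : Odd q ↔ (2 : E) ≠ 0 := by
    rw [Ne, FiniteField.two_eq_zero_iff_even_card, Nat.not_even_iff_odd, hE,
      Nat.odd_pow_iff (by positivity)]
  have hq : q ≤ q ^ 2 ^ k := Nat.le_self_pow (by positivity) q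
  rw [hV]
  rw [hE] at hcount
  split_ifs with hq_odd
  · rw [card_filter_neg_sub_eq_self_of_two_ne_zero (hodd.1 hq_odd)] at hcount
    have := hq_odd.pos
    omega
  · rw [card_filter_neg_sub_eq_self_of_two_eq_zero (not_not.1 (mt hodd.2 hq_odd))
      ((_root_.map_ne_zero _).2 (ha.resolve_left hq_odd))] at hcount
    omega

/-- For `m = 2^k`, `k ≥ 1`, and `a ∈ F_q` with `a ≠ 0` if `q` is even,
`|V_m(a)| = (q^m − q + y₂)/2` where `y₂ = q − 1` for `q` odd and `y₂ = q` for `q`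
even. -/
theorem card_Vm_pow_two
    (q k : ℕ) (hq : 1 < q) (hk : 1 ≤ k)
    (F : Type*) [Field F] [Fintype F] (hF : Fintype.card F = q)
    (E : Type*) [Field E] [Fintype E] [Algebra F E]
    (hE : Fintype.card E = q ^ (2 ^ k))
    (a : F) (ha : Odd q ∨ a ≠ 0) :
    2 * Set.ncard {α : E | IntermediateField.adjoin F {α} = ⊤ ∧
        Irreducible (X ^ 2 + C (algebraMap F E a) * X - C α)} =
      q ^ (2 ^ k) - q + (if Odd q then q - 1 else q) :=
  card_Vm_pow_two_general q k F hF E hE a ha
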